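/- arXiv:1708.09111 — 2 statements merged into one kernel-verified Lean document; each statement's English description precedes it below -/
import Mathlib

section
/- Every generating subset of the endomorphism semigroup End(B_n) of the Brandt semigroup B_n contains the zero constant map ξ_θ and contains at least one nonzero constant map ξ_{(i,i)} for some i ∈ [n]. -/
/-- The underlying set of the Brandt semigroup `B_n`: pairs `(i,j)` with
`i, j ∈ [n]` together with the zero element `θ` (represented by `none`). -/
abbrev Brandt (n : ℕ) := Option (Fin n × Fin n)

/-- The Brandt semigroup operation: `(i,j) + (k,l) = (i,l)` if `j = k`, and `θ`
otherwise; `θ` is a two-sided zero. -/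
def bmul {n : ℕ} : Brandt n → Brandt n → Brandt n
  | some (i, j), some (k, l) => if j = k then some (i, l) else none
  | _, _ => none

instance {n : ℕ} : Mul (Brandt n) := ⟨bmul⟩

@[simp] lemma brandt_mul_def {n : ℕ} (x y : Brandt n) : x * y = bmul x y := rfl

/-- A map `B_n → B_n` is a (semigroup) endomorphism if it preserves the operation. -/
def IsEndo {n : ℕ} (f : Brandt n → Brandt n) : Prop :=
  ∀ x y : Brandt n, f (x * y) = f x * f y

/-- `End(B_n)`: the semigroup (indeed monoid) of endomorphisms of `B_n`.
Multiplication `f * g` is "first `f`, then `g`", the composition convention of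
the paper. -/
def BrandtEnd (n : ℕ) := {f : Brandt n → Brandt n // IsEndo f}

instance {n : ℕ} : Monoid (BrandtEnd n) where
  mul f g := ⟨g.1 ∘ f.1, fun x y =>
    (congrArg g.1 (f.2 x y)).trans (g.2 _ _)⟩
  one := ⟨id, fun _ _ => rfl⟩
  mul_assoc f g h := rfl
  one_mul f := rfl
  mul_one f := rfl

/-- The zero constant endomorphism `ξ_θ`, sending every element of `B_n` to `θ`. -/
def xiTheta (n : ℕ) : BrandtEnd n := ⟨fun _ => (none : Brandt n), fun _ _ => rfl⟩

/-- The nonzero idempotent-valued constant endomorphism `ξ_{(i,i)}`. -/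
def xiDiag {n : ℕ} (i : Fin n) : BrandtEnd n :=
  ⟨fun _ => (some (i, i) : Brandt n), fun _ _ => by simp [bmul]⟩


lemma endo_kill (n : ℕ) (g : Brandt n → Brandt n) (hg : IsEndo g)
    (i j : Fin n) (h : g (some (i, j)) = none) : ∀ x, g x = none := by
  have hil : ∀ l : Fin n, g (some (i, l)) = none := by
    intro l
    have : (some (i, j) : Brandt n) * some (j, l) = some (i, l) := by simp [bmul]
    have := (hg (some (i, j)) (some (j, l))).symm.trans (congrArg g this)
    rw [h] at this
    simpa [bmul] using this.symm
  have hkl : ∀ k l : Fin n, g (some (k, l)) = none := by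
    intro k l
    have : (some (k, i) : Brandt n) * some (i, l) = some (k, l) := by simp [bmul]
    have := (hg (some (k, i)) (some (i, l))).symm.trans (congrArg g this)
    rw [hil l] at this
    have := this.symm
    simp only [brandt_mul_def] at this
    rcases hx : g (some (k, i)) with _ | ⟨a, b⟩ <;> rw [hx] at this <;>
      simpa [bmul] using this
  intro x
  rcases x with _ | ⟨k, l⟩
  · have : (some (i, j) : Brandt n) * none = none := rfl
    have h2 := (hg (some (i, j)) none).symm.trans (congrArg g this)
    rw [h] at h2
    simpa [bmul] using h2.symm
  · exact hkl k l

lemma endo_const (n : ℕ) (g : Brandt n → Brandt n) (hg : IsEndo g)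
    (a : Fin n × Fin n) (h : g none = some a) :
    ∃ i : Fin n, ∀ x, g x = some (i, i) := by
  obtain ⟨i, j⟩ := a
  have hidem : g none = g none * g none := by
    have : (none : Brandt n) * none = none := rfl
    exact (congrArg g this).symm.trans (hg none none)
  rw [h] at hidem
  have hij : j = i := by
    by_contra hne
    simp [bmul, hne] at hidem
  rw [hij] at h
  refine ⟨i, fun x => ?_⟩
  have : x * (none : Brandt n) = none := by rcases x with _ | ⟨a, b⟩ <;> rfl
  have h2 := (congrArg g this).symm.trans (hg x none)
  rw [h] at h2
  rcases hx : g x with _ | ⟨k, l⟩ <;> rw [hx] at h2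
  · simp [bmul] at h2
  · by_cases hl : l = i
    · subst hl
      simp [bmul] at h2
      simp [h2]
    · simp [bmul, hl] at h2

/-- Every generating subset of `End(B_n)` contains the zero constant map `ξ_θ`
and at least one nonzero constant map `ξ_{(i,i)}`. -/
theorem generating_set_contains_constants (n : ℕ) (hn : 1 ≤ n)
    (U : Set (BrandtEnd n)) (hU : Subsemigroup.closure U = ⊤) :
    xiTheta n ∈ U ∧ ∃ i : Fin n, xiDiag i ∈ U := by
  have top1 : xiTheta n ∈ Subsemigroup.closure U := by rw [hU]; trivial
  have top2 : xiDiag (⟨0, hn⟩ : Fin n) ∈ Subsemigroup.closure U := by rw [hU]; trivial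
  constructor
  · have key : ∀ h ∈ Subsemigroup.closure U,
        (∀ x, h.1 x = none) → xiTheta n ∈ U := by
      intro h hmem
      induction hmem using Subsemigroup.closure_induction with
      | mem h hU' =>
        intro hz
        have : h = xiTheta n := Subtype.ext (funext hz)
        rwa [this] at hU'
      | mul f g hf hg ihf ihg =>
        intro hz
        by_cases hfz : ∀ x, f.1 x = none
        · exact ihf hfz
        · push_neg at hfz
          obtain ⟨x, hx⟩ := hfz
          rcases hy : f.1 x with _ | ⟨i, j⟩
          · exact absurd hy hx
          · have hgij : g.1 (some (i, j)) = none := by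
              have := hz x
              have hfg : (f * g).1 x = g.1 (f.1 x) := rfl
              rw [hfg, hy] at this
              exact this
            exact ihg (endo_kill n g.1 g.2 i j hgij)
    refine key _ top1 (fun _ => rfl)
  · have key : ∀ h ∈ Subsemigroup.closure U,
        (h.1 none ≠ none) → ∃ i : Fin n, xiDiag i ∈ U := by
      intro h hmem
      induction hmem using Subsemigroup.closure_induction with
      | mem h hU' =>
        intro hz
        rcases ha : h.1 none with _ | a
        · exact absurd ha hz
        · obtain ⟨i, hi⟩ := endo_const n h.1 h.2 a ha
          exact ⟨i, by have : h = xiDiag i := Subtype.ext (funext hi); rwa [this] at hU'⟩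
      | mul f g hf hg ihf ihg =>
        intro hz
        have hfg : (f * g).1 none = g.1 (f.1 none) := rfl
        rw [hfg] at hz
        rcases hy : f.1 none with _ | a
        · rw [hy] at hz
          exact ihg hz
        · exact ihf (by rw [hy]; simp)
    exact key _ top2 (by intro h; simp [xiDiag] at h)
end

section
/- For n ≥ 2, the singleton {ξ_θ} consisting of the zero constant map is a prime subset of End(B_n) of minimum cardinality, and the endomorphism semigroup End(B_n) of the Brandt semigroup B_n has exactly n! + n + 1 elements. -/
/-- A nonempty subset `U` of a semigroup is prime if `a * b ∈ U` implies
`a ∈ U` or `b ∈ U`. -/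
def IsPrimeSubset {M : Type*} [Mul M] (U : Set M) : Prop :=
  U.Nonempty ∧ ∀ a b : M, a * b ∈ U → a ∈ U ∨ b ∈ U

section Aux

variable {n : ℕ}

@[simp] lemma bmul_none_right (x : Brandt n) : bmul x none = none := by
  rcases x with _ | ⟨i, j⟩ <;> rfl

@[simp] lemma bmul_none_left (x : Brandt n) : bmul none x = none := rfl

@[simp] lemma bmul_some (i j k l : Fin n) :
    bmul (some (i, j)) (some (k, l)) = if j = k then some (i, l) else none := rfl

/-- The endomorphism induced by a permutation. -/
def permEndo (σ : Equiv.Perm (Fin n)) : BrandtEnd n :=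
  ⟨fun x => x.map fun p => (σ p.1, σ p.2), by
    rintro (_ | ⟨i, j⟩) (_ | ⟨k, l⟩) <;> simp⟩

/-- The constant endomorphism with value the idempotent `(k,k)`. -/
def constEndo (k : Fin n) : BrandtEnd n :=
  ⟨fun _ => some (k, k), fun _ _ => by simp⟩

instance : Finite (BrandtEnd n) := by unfold BrandtEnd; infer_instance

lemma mul_val (f g : BrandtEnd n) : (f * g).1 = g.1 ∘ f.1 := rfl

/-- Classification of the endomorphisms of `B_n`. -/
lemma classify (f : BrandtEnd n) :
    (∃ σ : Equiv.Perm (Fin n), f = permEndo σ) ∨ (∃ k, f = constEndo k) ∨ f = xiTheta n := by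
  obtain ⟨f, hf⟩ := f
  match h0 : f none with
  | some (p, q) =>
    have hpq : q = p := by
      have h := hf none none
      rw [brandt_mul_def, bmul_none_left, h0, brandt_mul_def, bmul_some] at h
      by_contra hne
      simp [hne] at h
    subst hpq
    right; left
    refine ⟨q, Subtype.ext (funext fun x => ?_)⟩
    have h := hf x none
    rw [brandt_mul_def, bmul_none_right, h0, brandt_mul_def] at h
    match hx : f x with
    | none => rw [hx] at h; simp at h
    | some (a, b) =>
      rw [hx, bmul_some] at h
      by_cases hb : b = q
      · subst hb
        simp at h
        simp [constEndo, hx, h]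
      · simp [hb] at h
  | none =>
    by_cases hz : ∃ i j, f (some (i, j)) = none
    · right; right
      obtain ⟨i, j, hij⟩ := hz
      have hii : f (some (i, i)) = none := by
        have h := hf (some (i, j)) (some (j, i))
        rw [brandt_mul_def, bmul_some] at h
        simpa [hij] using h
      have hall : ∀ a b, f (some (a, b)) = none := by
        intro a b
        have h1 : f (some (i, b)) = none := by
          have h := hf (some (i, i)) (some (i, b))
          rw [brandt_mul_def, bmul_some] at h
          simpa [hii] using h
        have h := hf (some (a, i)) (some (i, b))
        rw [brandt_mul_def, bmul_some] at h
        simpa [h1] using h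
      exact Subtype.ext (funext fun x => by
        rcases x with _ | ⟨a, b⟩
        · exact h0
        · exact hall a b)
    · left
      push_neg at hz
      have hdiag : ∀ i : Fin n, ∃ p, f (some (i, i)) = some (p, p) := by
        intro i
        obtain ⟨⟨a, b⟩, hab⟩ := Option.ne_none_iff_exists'.mp (hz i i)
        have h := hf (some (i, i)) (some (i, i))
        rw [brandt_mul_def, bmul_some, if_pos rfl, hab, brandt_mul_def, bmul_some] at h
        by_cases hba : b = a
        · exact ⟨a, by rw [hab, hba]⟩
        · simp [hba] at h
      set σf : Fin n → Fin n := fun i => (hdiag i).choose with hσf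
      have hσ : ∀ i, f (some (i, i)) = some (σf i, σf i) := fun i => (hdiag i).choose_spec
      have hinj : Function.Injective σf := by
        intro i j hij
        by_contra hne
        have h := hf (some (i, i)) (some (j, j))
        rw [brandt_mul_def, bmul_some, if_neg hne, h0, hσ i, hσ j, brandt_mul_def,
          bmul_some, if_pos hij] at h
        cases h
      have hbij := Finite.injective_iff_bijective.mp hinj
      refine ⟨Equiv.ofBijective σf hbij, Subtype.ext (funext fun x => ?_)⟩
      rcases x with _ | ⟨a, b⟩
      · exact h0
      · obtain ⟨⟨x, y⟩, hxy⟩ := Option.ne_none_iff_exists'.mp (hz a b)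
        have hx : x = σf a := by
          have h := hf (some (a, a)) (some (a, b))
          rw [brandt_mul_def, bmul_some, if_pos rfl, hxy, hσ a, brandt_mul_def,
            bmul_some] at h
          by_cases hc : σf a = x
          · exact hc.symm
          · simp [hc] at h
        have hy : y = σf b := by
          have h := hf (some (a, b)) (some (b, b))
          rw [brandt_mul_def, bmul_some, if_pos rfl, hxy, hσ b, brandt_mul_def,
            bmul_some] at h
          by_cases hc : y = σf b
          · exact hc
          · simp [hc] at h
        exact hxy.trans (by rw [hx, hy]; simp [permEndo, Equiv.ofBijective])

lemma permEndo_ne_const (σ : Equiv.Perm (Fin n)) (k : Fin n) : permEndo σ ≠ constEndo k := by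
  intro h
  have := congrFun (congrArg Subtype.val h) none
  simp [permEndo, constEndo] at this

lemma permEndo_ne_xi (hn : 0 < n) (σ : Equiv.Perm (Fin n)) : permEndo σ ≠ xiTheta n := by
  intro h
  have := congrFun (congrArg Subtype.val h) (some (⟨0, hn⟩, ⟨0, hn⟩))
  simp [permEndo, xiTheta] at this

lemma constEndo_ne_xi (k : Fin n) : constEndo k ≠ xiTheta n := by
  intro h
  have := congrFun (congrArg Subtype.val h) none
  simp [constEndo, xiTheta] at this

lemma permEndo_injective : Function.Injective (permEndo (n := n)) := by
  intro σ τ h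
  exact Equiv.ext fun i => by
    simpa [permEndo] using congrFun (congrArg Subtype.val h) (some (i, i))

lemma constEndo_injective : Function.Injective (constEndo (n := n)) := by
  intro k m h
  have := congrFun (congrArg Subtype.val h) none
  simpa [constEndo] using this

/-- The explicit enumeration of `End(B_n)`. -/
def endoEnum : Equiv.Perm (Fin n) ⊕ (Fin n ⊕ Unit) → BrandtEnd n
  | .inl σ => permEndo σ
  | .inr (.inl k) => constEndo k
  | .inr (.inr _) => xiTheta n

lemma endoEnum_bijective (hn : 0 < n) : Function.Bijective (endoEnum (n := n)) := by
  constructor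
  · rintro (σ | k | u) (τ | m | v) h <;> simp only [endoEnum] at h
    · rw [permEndo_injective h]
    · exact absurd h (permEndo_ne_const σ m)
    · exact absurd h (permEndo_ne_xi hn σ)
    · exact absurd h.symm (permEndo_ne_const τ k)
    · rw [constEndo_injective h]
    · exact absurd h (constEndo_ne_xi k)
    · exact absurd h.symm (permEndo_ne_xi hn τ)
    · exact absurd h.symm (constEndo_ne_xi m)
    · rfl
  · intro f
    rcases classify f with ⟨σ, rfl⟩ | ⟨k, rfl⟩ | rfl
    · exact ⟨.inl σ, rfl⟩
    · exact ⟨.inr (.inl k), rfl⟩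
    · exact ⟨.inr (.inr ()), rfl⟩

end Aux

/-- For `n ≥ 2`, the singleton `{ξ_θ}` is a prime subset of `End(B_n)` of
minimum cardinality, and `End(B_n)` has exactly `n! + n + 1` elements. -/
theorem xiTheta_smallest_prime_and_card (n : ℕ) (hn : 2 ≤ n) :
    IsPrimeSubset ({xiTheta n} : Set (BrandtEnd n)) ∧
    (∀ V : Set (BrandtEnd n), IsPrimeSubset V →
      ({xiTheta n} : Set (BrandtEnd n)).ncard ≤ V.ncard) ∧
    Nat.card (BrandtEnd n) = n.factorial + n + 1 := by
  have hn0 : 0 < n := lt_of_lt_of_le two_pos hn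
  have prime : IsPrimeSubset ({xiTheta n} : Set (BrandtEnd n)) := by
    refine ⟨⟨xiTheta n, rfl⟩, fun a b hab => ?_⟩
    simp only [Set.mem_singleton_iff] at hab ⊢
    have hval : b.1 ∘ a.1 = fun _ => none := congrArg Subtype.val hab
    rcases classify a with ⟨σ, rfl⟩ | ⟨k, rfl⟩ | rfl
    · right
      refine Subtype.ext (funext fun y => ?_)
      have hy : (permEndo σ).1 ((permEndo σ⁻¹).1 y) = y := by
        rcases y with _ | ⟨i, j⟩ <;> simp [permEndo]
      have := congrFun hval ((permEndo σ⁻¹).1 y)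
      exact (show b.1 y = none by simpa [hy] using this)
    · right
      have hb : b.1 (some (k, k)) = none := by
        have := congrFun hval none
        simpa [constEndo] using this
      rcases classify b with ⟨τ, rfl⟩ | ⟨m, rfl⟩ | rfl
      · simp [permEndo] at hb
      · simp [constEndo] at hb
      · rfl
    · left; rfl
  refine ⟨prime, fun V hV => ?_, ?_⟩
  · rw [Set.ncard_singleton]
    exact (Set.ncard_pos (Set.toFinite V)).mpr hV.1
  · rw [← Nat.card_eq_of_bijective _ (endoEnum_bijective hn0)]
    simp [Nat.card_eq_fintype_card, Fintype.card_perm, Fintype.card_fin]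
    ring
end
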